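/- arXiv:1701.05098 — 5 statements merged into one kernel-verified Lean document; each statement's English description precedes it below -/
import Mathlib

section
/- For every real number x with x ≠ 0 (or, more generally, for every real x, with integer powers interpreted so that 0 raised to a negative exponent is 0) and every positive integer m, one has -i/(x+i)^m = Σ_{n=1}^{m} [ (-1)^n · x^{m-(2n-1)} / (1+x²)^m · C(m, 2n-1) + i · (-1)^n · x^{m-2(n-1)} / (1+x²)^m · C(m, 2(n-1)) ], where C(m,k) is the binomial coefficient (equal to 0 when k > m). -/
/-!
Multiplying numerator and denominator by $(x - i)^m$ turns the left side into
$-i(x - i)^m / (1 + x^2)^m$. Expanding $(x - i)^m$ by the binomial theorem and grouping the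
indices $k = 2n - 2$ and $k = 2n - 1$ in pairs gives the sum: $(-i)^{2n-1} = (-1)^n i$ and
$(-i)^{2n} = (-1)^n$. The pairs $n \le m$ reach up to $k = 2m - 1 \ge m$, and the extra terms
with $k > m$ vanish since $\binom{m}{k} = 0$.
-/

open Complex Finset

theorem sum_Icc_pairs_eq_sum_range_two_mul {M : Type*} [AddCommMonoid M] (f : ℕ → M) (m : ℕ) :
    ∑ n ∈ Icc 1 m, (f (2 * (n - 1)) + f (2 * n - 1)) = ∑ k ∈ range (2 * m), f k := by
  induction m with
  | zero => simp
  | succ m ih =>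
    rw [sum_Icc_succ_top (by omega), ih, show 2 * (m + 1) = 2 * m + 1 + 1 by ring,
      sum_range_succ, sum_range_succ]
    simp [add_assoc]

theorem ofReal_add_I_mul_ofReal_sub_I (x : ℝ) :
    ((x : ℂ) + I) * ((x : ℂ) - I) = 1 + (x : ℂ) ^ 2 := by
  ring_nf; rw [I_sq]; ring

theorem ofReal_sub_I_ne_zero (x : ℝ) : (x : ℂ) - I ≠ 0 := by
  intro h; simpa using congrArg im h

theorem neg_I_div_ofReal_add_I_pow (x : ℝ) (m : ℕ) :
    -I / ((x : ℂ) + I) ^ m = -I * ((x : ℂ) - I) ^ m / (1 + (x : ℂ) ^ 2) ^ m := by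
  rw [← ofReal_add_I_mul_ofReal_sub_I, mul_pow,
    mul_div_mul_right _ _ (pow_ne_zero _ (ofReal_sub_I_ne_zero x))]

theorem neg_I_mul_sub_I_pow (z : ℂ) (m : ℕ) :
    -I * (z - I) ^ m = ∑ k ∈ range (m + 1), (-I) ^ (k + 1) * z ^ ((m : ℤ) - k) * m.choose k := by
  rw [sub_eq_neg_add, add_pow, mul_sum]
  refine sum_congr rfl fun k hk ↦ ?_
  rw [show (m : ℤ) - k = ((m - k : ℕ) : ℤ) by grind, zpow_natCast, pow_succ]
  ring

theorem neg_I_pow_two_mul (n : ℕ) : (-I) ^ (2 * n) = (-1) ^ n := by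
  rw [pow_mul, neg_sq, I_sq]

theorem neg_I_pow_two_mul_sub_one {n : ℕ} (hn : 1 ≤ n) : (-I) ^ (2 * n - 1) = (-1) ^ n * I := by
  obtain ⟨n, rfl⟩ := Nat.exists_eq_add_of_le hn
  rw [show 2 * (1 + n) - 1 = 2 * n + 1 by omega, pow_succ, neg_I_pow_two_mul]
  ring

theorem neg_i_div_pow_eq_sum_general (x : ℝ) (m : ℕ) (hm : 0 < m) :
    (-I) / ((x : ℂ) + I) ^ m =
      ∑ n ∈ Finset.Icc 1 m,
        ((-1 : ℂ) ^ n * (x : ℂ) ^ ((m : ℤ) - (2 * (n : ℤ) - 1)) / (1 + (x : ℂ) ^ 2) ^ m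
            * (m.choose (2 * n - 1) : ℂ)
          + I * ((-1 : ℂ) ^ n * (x : ℂ) ^ ((m : ℤ) - 2 * ((n : ℤ) - 1))
            / (1 + (x : ℂ) ^ 2) ^ m * (m.choose (2 * (n - 1)) : ℂ))) := by
  set term : ℕ → ℂ := fun k ↦
    (-I) ^ (k + 1) * (x : ℂ) ^ ((m : ℤ) - k) * m.choose k / (1 + (x : ℂ) ^ 2) ^ m
  have term_eq_zero : ∀ k ≥ m + 1, term k = 0 := fun k hk ↦ by
    simp [term, Nat.choose_eq_zero_of_lt (Nat.lt_of_succ_le hk)]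
  calc -I / ((x : ℂ) + I) ^ m
      = ∑ k ∈ range (m + 1), term k := by
        rw [neg_I_div_ofReal_add_I_pow, neg_I_mul_sub_I_pow, sum_div]
    _ = ∑ k ∈ range (2 * m), term k := (eventually_constant_sum term_eq_zero (by omega)).symm
    _ = _ := by
      rw [← sum_Icc_pairs_eq_sum_range_two_mul]
      refine sum_congr rfl fun n hn_mem ↦ ?_
      have hn : 1 ≤ n := (mem_Icc.mp hn_mem).1
      simp only [term]
      rw [show 2 * (n - 1) + 1 = 2 * n - 1 by omega, show 2 * n - 1 + 1 = 2 * n by omega,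
        neg_I_pow_two_mul, neg_I_pow_two_mul_sub_one hn]
      push_cast [Nat.cast_sub hn, Nat.cast_sub (show 1 ≤ 2 * n by omega)]
      ring

theorem neg_i_div_pow_eq_sum (x : ℝ) (hx : x ≠ 0) (m : ℕ) (hm : 0 < m) :
    (-I) / ((x : ℂ) + I) ^ m =
      ∑ n ∈ Finset.Icc 1 m,
        ((-1 : ℂ) ^ n * (x : ℂ) ^ ((m : ℤ) - (2 * (n : ℤ) - 1)) / (1 + (x : ℂ) ^ 2) ^ m
            * (m.choose (2 * n - 1) : ℂ)
          + I * ((-1 : ℂ) ^ n * (x : ℂ) ^ ((m : ℤ) - 2 * ((n : ℤ) - 1))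
            / (1 + (x : ℂ) ^ 2) ^ m * (m.choose (2 * (n - 1)) : ℂ))) :=
  neg_i_div_pow_eq_sum_general x m hm
end

section
/- For every real number x with x ≠ 0 (or, more generally, for every real x, with integer powers interpreted so that 0 raised to a negative exponent is 0) and every positive integer m, one has (1/i) · ( 1/(x+i)^m - 1/(x-i)^m ) = 2 · Σ_{n=1}^{m} (-1)^n · x^{m-(2n-1)} / (1+x²)^m · C(m, 2n-1). -/
/-! Over the common denominator `((x + i)(x - i))^m = (1 + x²)^m` the numerator is
`(x - i)^m - (x + i)^m`. Expanding binomially, the terms of even degree in `i` cancel and those of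
odd degree `2n - 1` double, and `i^(2n - 1) / i = (-1)^(n - 1)`. -/

open Complex Finset

theorem sum_range_two_mul_add_one_eq_sum_odd {M : Type*} [AddCommMonoid M] (g : ℕ → M)
    (hg : ∀ j, Even j → g j = 0) (m : ℕ) :
    ∑ j ∈ range (2 * m + 1), g j = ∑ n ∈ Icc 1 m, g (2 * n - 1) := by
  induction m with
  | zero => simp [hg 0 ⟨0, rfl⟩]
  | succ m ih =>
    rw [show 2 * (m + 1) + 1 = 2 * m + 1 + 1 + 1 by ring, sum_range_succ, sum_range_succ, ih,
      sum_Icc_succ_top (by omega), hg (2 * m + 1 + 1) ⟨m + 1, by ring⟩,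
      show 2 * (m + 1) - 1 = 2 * m + 1 by omega, add_zero]

theorem add_pow_sub_sub_pow {R : Type*} [CommRing R] (a b : R) (m : ℕ) :
    (a + b) ^ m - (a - b) ^ m =
      2 * ∑ n ∈ Icc 1 m, a ^ (m - (2 * n - 1)) * b ^ (2 * n - 1) * (m.choose (2 * n - 1) : R) := by
  set g : ℕ → R := fun k => (b ^ k - (-b) ^ k) * a ^ (m - k) * (m.choose k : R) with hg
  have h_even : ∀ k, Even k → g k = 0 := fun k hk => by simp [hg, hk.neg_pow]
  have h_big : ∀ k ∈ range (2 * m + 1), k ∉ range (m + 1) → g k = 0 := fun k _ hk => by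
    simp [hg, Nat.choose_eq_zero_of_lt (by simpa using hk : m < k)]
  calc (a + b) ^ m - (a - b) ^ m = ∑ k ∈ range (m + 1), g k := by
        rw [add_comm a, show a - b = -b + a by ring, add_pow, add_pow, ← sum_sub_distrib]
        exact sum_congr rfl fun k _ => by ring
    _ = ∑ k ∈ range (2 * m + 1), g k :=
        sum_subset (range_subset_range.2 (by omega)) h_big
    _ = _ := by
        rw [sum_range_two_mul_add_one_eq_sum_odd g h_even, mul_sum]
        refine sum_congr rfl fun n hn => ?_
        have h_odd : Odd (2 * n - 1) := ⟨n - 1, by have := (mem_Icc.1 hn).1; omega⟩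
        simp only [hg, h_odd.neg_pow]
        ring

theorem Complex.I_pow_two_mul_sub_one {n : ℕ} (hn : n ≠ 0) : I ^ (2 * n - 1) = -I * (-1) ^ n := by
  obtain ⟨k, rfl⟩ := Nat.exists_eq_succ_of_ne_zero hn
  rw [show 2 * k.succ - 1 = 2 * k + 1 by omega, pow_succ, pow_mul, I_sq, pow_succ]
  ring

theorem zpow_natCast_sub_mul_choose {K : Type*} [DivisionRing K] (x : K) (m k : ℕ) :
    x ^ ((m : ℤ) - k) * (m.choose k : K) = x ^ (m - k) * (m.choose k : K) := by
  rcases le_or_gt k m with hk | hk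
  · rw [← Nat.cast_sub hk, zpow_natCast]
  · simp [Nat.choose_eq_zero_of_lt hk]

theorem diff_inv_pow_eq_two_sum_general (x : ℝ) (m : ℕ) :
    (1 / I) * (1 / ((x : ℂ) + I) ^ m - 1 / ((x : ℂ) - I) ^ m) =
      2 * ∑ n ∈ Finset.Icc 1 m,
        (-1 : ℂ) ^ n * (x : ℂ) ^ ((m : ℤ) - (2 * (n : ℤ) - 1)) / (1 + (x : ℂ) ^ 2) ^ m
          * (m.choose (2 * n - 1) : ℂ) := by
  have h_prod : ((x : ℂ) + I) * ((x : ℂ) - I) = 1 + (x : ℂ) ^ 2 := by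
    linear_combination -I_sq
  have h_norm : 1 + (x : ℂ) ^ 2 ≠ 0 := by exact_mod_cast (by positivity : (1 + x ^ 2 : ℝ) ≠ 0)
  have h_plus : (x : ℂ) + I ≠ 0 := left_ne_zero_of_mul (h_prod ▸ h_norm)
  have h_minus : (x : ℂ) - I ≠ 0 := right_ne_zero_of_mul (h_prod ▸ h_norm)
  calc (1 / I) * (1 / ((x : ℂ) + I) ^ m - 1 / ((x : ℂ) - I) ^ m)
      = -(1 / I) * (((x : ℂ) + I) ^ m - ((x : ℂ) - I) ^ m) / (1 + (x : ℂ) ^ 2) ^ m := by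
        rw [← h_prod, mul_pow]; field_simp; ring
    _ = 2 * ∑ n ∈ Icc 1 m,
          (-1 : ℂ) ^ n * (x : ℂ) ^ (m - (2 * n - 1)) / (1 + (x : ℂ) ^ 2) ^ m
            * (m.choose (2 * n - 1) : ℂ) := by
        rw [add_pow_sub_sub_pow, mul_sum, mul_sum, sum_div, mul_sum]
        refine sum_congr rfl fun n hn => ?_
        rw [I_pow_two_mul_sub_one (by have := (mem_Icc.1 hn).1; omega)]
        field_simp
    _ = _ := by
        congr 1
        refine sum_congr rfl fun n hn => ?_
        have h_exp : 2 * (n : ℤ) - 1 = ((2 * n - 1 : ℕ) : ℤ) := by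
          have := (mem_Icc.1 hn).1; omega
        rw [h_exp]
        linear_combination (-(-1) ^ n / (1 + (x : ℂ) ^ 2) ^ m) *
          zpow_natCast_sub_mul_choose (x : ℂ) m (2 * n - 1)

theorem diff_inv_pow_eq_two_sum (x : ℝ) (hx : x ≠ 0) (m : ℕ) (hm : 0 < m) :
    (1 / I) * (1 / ((x : ℂ) + I) ^ m - 1 / ((x : ℂ) - I) ^ m) =
      2 * ∑ n ∈ Finset.Icc 1 m,
        (-1 : ℂ) ^ n * (x : ℂ) ^ ((m : ℤ) - (2 * (n : ℤ) - 1)) / (1 + (x : ℂ) ^ 2) ^ m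
          * (m.choose (2 * n - 1) : ℂ) :=
  diff_inv_pow_eq_two_sum_general x m
end

section
/- For every positive integer m and every real number x with x ≠ 0 (or, more generally, for every real x, with integer powers interpreted so that 0 raised to a negative exponent is 0), the m-th iterated derivative of arctan at x equals (m-1)! · Σ_{n=1}^{m} (-1)^{m+n} · x^{m-(2n-1)} / (1+x²)^m · C(m, 2n-1). -/
open Complex Finset Nat

/-!
Since `arctan' x = 1 / (1 + x²) = Im (x - i)⁻¹`, the `m`-th derivative of `arctan` is
`(-1)^(m-1) (m-1)! Im (x - i)^(-m) = (-1)^(m-1) (m-1)! Im (x + i)^m / (1 + x²)^m`,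
and the binomial theorem expands `Im (x + i)^m` into its odd-index terms.
-/

theorem hasDerivAt_im_ofReal_sub_zpow {c : ℂ} (hc : c.im ≠ 0) (n : ℤ) (x : ℝ) :
    HasDerivAt (fun y : ℝ => (((y : ℂ) - c) ^ n).im)
      (n * (((x : ℂ) - c) ^ (n - 1)).im) x := by
  have hne : (x : ℂ) - c ≠ 0 := sub_ne_zero.2 fun h => hc (by simp [← h])
  have h := ((hasDerivAt_zpow n _ (Or.inl hne)).comp (x : ℂ)
    ((hasDerivAt_id _).sub_const c)).comp_ofReal
  simpa [Function.comp_def] using imCLM.hasFDerivAt.comp_hasDerivAt x h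

theorem iteratedDeriv_im_ofReal_sub_inv {c : ℂ} (hc : c.im ≠ 0) (k : ℕ) :
    iteratedDeriv k (fun x : ℝ => (((x : ℂ) - c)⁻¹).im) =
      fun x : ℝ => (-1) ^ k * k ! * (((x : ℂ) - c) ^ (-1 - k : ℤ)).im := by
  induction k with
  | zero => simp
  | succ k ih =>
    funext x
    rw [iteratedDeriv_succ, ih, ((hasDerivAt_im_ofReal_sub_zpow hc _ x).const_mul _).deriv,
      show (-1 - k : ℤ) - 1 = -1 - ((k + 1 : ℕ) : ℤ) by push_cast; ring, factorial_succ]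
    push_cast
    ring

theorem one_div_one_add_sq_eq_im_inv_ofReal_sub_I (x : ℝ) :
    1 / (1 + x ^ 2) = (((x : ℂ) - I)⁻¹).im := by
  simp [inv_im, normSq_apply]
  ring

theorem ofReal_sub_I_zpow_neg (x : ℝ) (m : ℕ) :
    ((x : ℂ) - I) ^ (-(m : ℤ)) = ((x : ℂ) + I) ^ m / ((1 + x ^ 2 : ℝ) : ℂ) ^ m := by
  have h : ((x : ℂ) - I) * ((x : ℂ) + I) = ((1 + x ^ 2 : ℝ) : ℂ) := by
    push_cast
    linear_combination -I_sq
  have hne : (x : ℂ) + I ≠ 0 := fun h => by simpa using congrArg im h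
  rw [zpow_neg, zpow_natCast, ← h, mul_pow, div_mul_cancel_right₀ (pow_ne_zero _ hne)]

theorem im_I_pow_two_mul (i : ℕ) : (I ^ (2 * i)).im = 0 := by
  rw [pow_mul, I_sq, ← ofReal_one, ← ofReal_neg, ← ofReal_pow, ofReal_im]

theorem im_I_pow_two_mul_add_one (i : ℕ) : (I ^ (2 * i + 1)).im = (-1) ^ i := by
  rw [pow_succ, pow_mul, I_sq, ← ofReal_one, ← ofReal_neg, ← ofReal_pow, im_ofReal_mul, I_im,
    mul_one]

theorem im_ofReal_add_I_pow (x : ℝ) (m : ℕ) :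
    (((x : ℂ) + I) ^ m).im =
      ∑ n ∈ Icc 1 m, (-1) ^ (n + 1) * x ^ ((m : ℤ) - (2 * n - 1)) * m.choose (2 * n - 1) := by
  have binomial : (((x : ℂ) + I) ^ m).im =
      ∑ j ∈ range (m + 1), (I ^ j).im * x ^ (m - j) * m.choose j := by
    rw [add_comm, add_pow, im_sum]
    refine sum_congr rfl fun j _ => ?_
    rw [← ofReal_pow, ← ofReal_natCast, mul_assoc, ← ofReal_mul, im_mul_ofReal, mul_assoc]
  have le_of_choose_ne_zero {n : ℕ} {a : ℝ} (h : a * (m.choose n : ℝ) ≠ 0) : n ≤ m := by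
    by_contra! hlt
    simp [Nat.choose_eq_zero_of_lt hlt] at h
  have odd_term {i : ℕ} (hi : 2 * i + 1 ≤ m) :
      (-1) ^ (i + 1 + 1) * x ^ ((m : ℤ) - (2 * ((i + 1 : ℕ) : ℤ) - 1)) *
          m.choose (2 * (i + 1) - 1) =
        (I ^ (2 * i + 1)).im * x ^ (m - (2 * i + 1)) * m.choose (2 * i + 1) := by
    rw [show 2 * (i + 1) - 1 = 2 * i + 1 by omega, im_I_pow_two_mul_add_one,
      show (m : ℤ) - (2 * ((i + 1 : ℕ) : ℤ) - 1) = ((m - (2 * i + 1) : ℕ) : ℤ) by omega,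
      zpow_natCast]
    ring
  rw [binomial]
  symm
  -- Only odd `j = 2 * n - 1 ≤ m` contribute; where the integer exponent `m - (2 * n - 1)` is
  -- negative, the binomial coefficient vanishes.
  refine sum_bij_ne_zero (fun n _ _ => 2 * n - 1) ?_ ?_ ?_ ?_
  · intro n hn h
    have := le_of_choose_ne_zero h
    simp only [mem_range]
    omega
  · intro a ha _ b hb _ hab
    simp only [mem_Icc] at ha hb
    omega
  · intro j hj h
    obtain ⟨i, rfl | rfl⟩ := Nat.even_or_odd' j
    · simp [im_I_pow_two_mul] at h
    · have hi := le_of_choose_ne_zero h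
      refine ⟨i + 1, by simp only [mem_Icc]; omega, by rwa [odd_term hi], by omega⟩
  · intro n hn h
    obtain ⟨i, rfl⟩ : ∃ i, n = i + 1 := ⟨n - 1, by simp only [mem_Icc] at hn; omega⟩
    exact odd_term (by have := le_of_choose_ne_zero h; omega)

theorem iteratedDeriv_arctan_eq_sum_general (m : ℕ) (hm : 0 < m) (x : ℝ) :
    iteratedDeriv m Real.arctan x =
      ((m - 1).factorial : ℝ) *
        ∑ n ∈ Finset.Icc 1 m,
          (-1 : ℝ) ^ (m + n) * x ^ ((m : ℤ) - (2 * (n : ℤ) - 1)) / (1 + x ^ 2) ^ m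
            * (m.choose (2 * n - 1) : ℝ) := by
  obtain ⟨k, rfl⟩ : ∃ k, m = k + 1 := ⟨m - 1, by omega⟩
  have hI : I.im ≠ 0 := by simp
  rw [iteratedDeriv_succ', Real.deriv_arctan, funext one_div_one_add_sq_eq_im_inv_ofReal_sub_I,
    congrFun (iteratedDeriv_im_ofReal_sub_inv hI k) x,
    show (-1 - k : ℤ) = -((k + 1 : ℕ) : ℤ) by push_cast; ring,
    ofReal_sub_I_zpow_neg, ← ofReal_pow, div_ofReal_im, im_ofReal_add_I_pow, Nat.add_sub_cancel]
  simp only [mul_sum, sum_div]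
  refine sum_congr rfl fun n _ => ?_
  rw [show k + 1 + n = k + (n + 1) by ring, pow_add]
  ring

theorem iteratedDeriv_arctan_eq_sum (m : ℕ) (hm : 0 < m) (x : ℝ) (hx : x ≠ 0) :
    iteratedDeriv m Real.arctan x =
      ((m - 1).factorial : ℝ) *
        ∑ n ∈ Finset.Icc 1 m,
          (-1 : ℝ) ^ (m + n) * x ^ ((m : ℤ) - (2 * (n : ℤ) - 1)) / (1 + x ^ 2) ^ m
            * (m.choose (2 * n - 1) : ℝ) :=
  iteratedDeriv_arctan_eq_sum_general m hm x
end

section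
/- For every nonzero real number x, arctan(x) equals i times the sum of the convergent series Σ_{m=1}^{∞} (1/(2m-1)) · ( 1/(1+2i/x)^{2m-1} - 1/(1-2i/x)^{2m-1} ); more precisely, this complex sum multiplied by i is real and equals arctan(x). -/
/-!
For `‖z‖ < 1` the odd part of the logarithm series sums to `½ log ((1 + z) / (1 - z))`; this is
the arctangent series at `-I * z`. The Möbius map `z ↦ (1 + z) / (1 - z)` sends the two points
`(1 ± 2I/x)⁻¹` of the unit disc to `1 ∓ x I`, which are complex conjugates of argument
`∓ arctan x`, so the series equals `½ (log (1 - x I) - log (1 + x I)) = -I arctan x`.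
-/

open Complex ComplexConjugate

namespace Complex

theorem hasSum_half_log_one_add_div_one_sub {z : ℂ} (hz : ‖z‖ < 1) :
    HasSum (fun m : ℕ => z ^ (2 * m + 1) / ↑(2 * m + 1)) (log ((1 + z) / (1 - z)) / 2) := by
  have h := (hasSum_arctan (z := -I * z) (by simpa)).mul_left I
  have hval : I * arctan (-I * z) = log ((1 + z) / (1 - z)) / 2 := by
    have hz' : -I * z * I = z := by rw [mul_right_comm, neg_mul, I_mul_I, neg_neg, one_mul]
    unfold Complex.arctan
    rw [hz', ← mul_assoc, mul_div_assoc', mul_neg, I_mul_I, neg_neg, one_div_mul_eq_div]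
  refine hval ▸ h.congr_fun fun m => ?_
  have hsign : (-1 : ℂ) ^ m * (-I) ^ (2 * m + 1) = -I := by
    rw [pow_succ, pow_mul, neg_sq, I_sq, ← mul_assoc, ← mul_pow, neg_one_mul, neg_neg, one_pow,
      one_mul]
  rw [mul_pow, ← mul_assoc, hsign, mul_div_assoc, ← mul_assoc, mul_neg, I_mul_I, neg_neg,
    one_mul]

theorem arg_one_add_ofReal_mul_I (x : ℝ) : arg (1 + x * I) = Real.arctan x := by
  have h := abs_arg_lt_pi_div_two_iff.mpr (Or.inl (by simp : 0 < (1 + x * I).re))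
  rw [← Real.arctan_tan (neg_lt_of_abs_lt h) (lt_of_abs_lt h), tan_arg]
  simp

theorem log_one_add_ofReal_mul_I_sub_log_one_sub_ofReal_mul_I (x : ℝ) :
    log (1 + x * I) - log (1 - x * I) = 2 * Real.arctan x * I := by
  have hconj : 1 - x * I = conj (1 + x * I) := by simp [sub_eq_add_neg]
  have harg : arg (1 + x * I) ≠ Real.pi := by
    rw [arg_one_add_ofReal_mul_I]
    exact ((Real.arctan_lt_pi_div_two x).trans (by linarith [Real.pi_pos])).ne
  rw [hconj, log_conj _ harg, sub_conj, log_im, arg_one_add_ofReal_mul_I]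
  push_cast
  ring

theorem norm_inv_one_add_lt_one {c : ℂ} (hre : 0 ≤ c.re) (hc : c ≠ 0) :
    ‖(1 + c)⁻¹‖ < 1 := by
  have hpos : 0 < c.re * c.re + c.im * c.im := normSq_apply c ▸ normSq_pos.mpr hc
  have hsq : 1 < ‖1 + c‖ ^ 2 := by
    rw [Complex.sq_norm, normSq_apply, add_re, add_im, one_re, one_im]
    nlinarith
  rw [norm_inv]
  exact inv_lt_one_of_one_lt₀ (by nlinarith [norm_nonneg (1 + c)])

theorem one_add_inv_div_one_sub_inv {c : ℂ} (hc : c ≠ 0) (hc' : 1 + c ≠ 0) :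
    (1 + (1 + c)⁻¹) / (1 - (1 + c)⁻¹) = 1 + 2 / c := by
  field_simp
  ring_nf
  rw [mul_inv_cancel₀ hc, sq, mul_assoc, mul_inv_cancel₀ hc]
  ring

theorem hasSum_inv_one_add_pow_odd_div {c : ℂ} (hre : 0 ≤ c.re) (hc : c ≠ 0) :
    HasSum (fun m : ℕ => (1 + c)⁻¹ ^ (2 * m + 1) / ↑(2 * m + 1)) (log (1 + 2 / c) / 2) := by
  have hc' : 1 + c ≠ 0 := fun h => by
    have := congrArg re h
    simp only [add_re, one_re, zero_re] at this
    linarith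
  rw [← one_add_inv_div_one_sub_inv hc hc']
  exact hasSum_half_log_one_add_div_one_sub (norm_inv_one_add_lt_one hre hc)

end Complex

theorem arctan_eq_i_mul_tsum (x : ℝ) (hx : x ≠ 0) :
    (Summable fun m : ℕ =>
      (1 / (2 * ((m : ℂ) + 1) - 1)) *
        (1 / (1 + 2 * I / (x : ℂ)) ^ (2 * (m + 1) - 1)
          - 1 / (1 - 2 * I / (x : ℂ)) ^ (2 * (m + 1) - 1))) ∧
    I * (∑' m : ℕ,
      (1 / (2 * ((m : ℂ) + 1) - 1)) *
        (1 / (1 + 2 * I / (x : ℂ)) ^ (2 * (m + 1) - 1)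
          - 1 / (1 - 2 * I / (x : ℂ)) ^ (2 * (m + 1) - 1))) =
      ((Real.arctan x : ℝ) : ℂ) := by
  set c : ℂ := 2 * I / x with hc_def
  have hc : c ≠ 0 := by simp [hc_def, hx]
  have hcre : c.re = 0 := by simp [hc_def]
  have htwo_div : 2 / c = -(x * I) := by
    rw [hc_def, div_div_eq_mul_div, mul_div_mul_left _ _ two_ne_zero, div_I]
  have hsum := (hasSum_inv_one_add_pow_odd_div hcre.ge hc).sub
    (hasSum_inv_one_add_pow_odd_div (by simp [hcre]) (neg_ne_zero.mpr hc))
  simp only [div_neg, htwo_div, neg_neg, ← sub_eq_add_neg] at hsum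
  have hterm : ∀ m : ℕ, (1 / (2 * ((m : ℂ) + 1) - 1)) *
        (1 / (1 + c) ^ (2 * (m + 1) - 1) - 1 / (1 - c) ^ (2 * (m + 1) - 1)) =
      (1 + c)⁻¹ ^ (2 * m + 1) / ↑(2 * m + 1)
        - (1 - c)⁻¹ ^ (2 * m + 1) / ↑(2 * m + 1) := by
    intro m
    rw [show 2 * (m + 1) - 1 = 2 * m + 1 by omega, inv_pow, inv_pow]
    push_cast
    ring
  replace hsum := hsum.congr_fun hterm
  refine ⟨hsum.summable, ?_⟩
  rw [hsum.tsum_eq]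
  linear_combination (-I / 2) * log_one_add_ofReal_mul_I_sub_log_one_sub_ofReal_mul_I x
    - (Real.arctan x : ℂ) * I_sq
end

section
/- For every nonzero real number x, the partial sums i · Σ_{m=1}^{⌊M/2⌋+1} (1/(2m-1)) · ( 1/(1+2i/x)^{2m-1} - 1/(1-2i/x)^{2m-1} ) converge, as M → ∞, to arctan(x) (regarded as a complex number). -/
/-!
For `‖a‖ > 1` the series `∑ a^(-(2m-1)) / (2m-1)` is the arcoth series `½ log ((a + 1) / (a - 1))`,
obtained from the arctangent series at `-i / a`. For `a = 1 ± 2i/x` the quotients `(a + 1) / (a - 1)`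
are the conjugate pair `1 ∓ x i`, whose logarithms differ by `2 i arg (1 + x i) = 2 i arctan x`.
-/

open Complex ComplexConjugate Filter Finset

theorem Complex.hasSum_half_log_one_add_div_one_sub_s17 {z : ℂ} (hz : ‖z‖ < 1) :
    HasSum (fun n : ℕ => z ^ (2 * n + 1) / ↑(2 * n + 1)) (log ((1 + z) / (1 - z)) / 2) := by
  have h := (hasSum_arctan (z := -I * z) (by simpa using hz)).mul_left I
  have hvalue : I * Complex.arctan (-I * z) = log ((1 + z) / (1 - z)) / 2 := by
    rw [Complex.arctan, show -I * z * I = z by linear_combination (-z) * I_sq]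
    linear_combination (-log ((1 + z) / (1 - z)) / 2) * I_sq
  rw [hvalue] at h
  refine h.congr_fun fun n => ?_
  have hsign : ((-1 : ℂ) ^ n) ^ 2 = 1 := by rw [← pow_mul, mul_comm, pow_mul]; simp
  rw [mul_pow, pow_succ (-I), pow_mul (-I), neg_sq, I_sq]
  set c := z ^ (2 * n + 1) / ↑(2 * n + 1)
  linear_combination (c * ((-1) ^ n) ^ 2) * I_sq - c * hsign

theorem Complex.hasSum_half_log_add_one_div_sub_one {a : ℂ} (ha : 1 < ‖a‖) :
    HasSum (fun n : ℕ => 1 / ↑(2 * n + 1) * (1 / a ^ (2 * n + 1)))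
      (log ((a + 1) / (a - 1)) / 2) := by
  have ha0 : a ≠ 0 := norm_pos_iff.mp (one_pos.trans ha)
  have ha1 : a - 1 ≠ 0 := by
    rintro h; rw [sub_eq_zero.mp h, norm_one] at ha; exact lt_irrefl _ ha
  have hinv : ‖a⁻¹‖ < 1 := by rw [norm_inv]; exact inv_lt_one_of_one_lt₀ ha
  convert hasSum_half_log_one_add_div_one_sub_s17 hinv using 1
  · funext n; rw [inv_pow]; ring
  · congr 2; field_simp

theorem Complex.arg_one_add_ofReal_mul_I_s17 (x : ℝ) : arg (1 + x * I) = Real.arctan x := by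
  have h := abs_lt.mp (abs_arg_lt_pi_div_two_iff.mpr (Or.inl (by simp : 0 < (1 + x * I).re)))
  rw [← Real.arctan_tan h.1 h.2, tan_arg]
  simp

theorem Complex.log_one_add_ofReal_mul_I_sub_log_one_sub (x : ℝ) :
    log (1 + x * I) - log (1 - x * I) = 2 * Real.arctan x * I := by
  have hconj : 1 - x * I = conj (1 + x * I) := by simp [sub_eq_add_neg]
  have hpi : arg (1 + x * I) ≠ Real.pi := by
    rw [arg_one_add_ofReal_mul_I_s17]
    exact ((Real.arctan_lt_pi_div_two x).trans (by linarith [Real.pi_pos])).ne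
  rw [hconj, log_conj _ hpi, sub_conj, log_im, arg_one_add_ofReal_mul_I_s17]
  push_cast; ring

theorem Complex.one_lt_norm_one_add_ofReal_mul_I {t : ℝ} (ht : t ≠ 0) : 1 < ‖1 + t * I‖ := by
  rw [show (1 : ℂ) = ((1 : ℝ) : ℂ) by simp, norm_add_mul_I, Real.lt_sqrt zero_le_one]
  nlinarith [sq_pos_of_ne_zero ht]

theorem tendsto_sum_Icc_one_of_hasSum {α : Type*} [AddCommMonoid α] [TopologicalSpace α]
    {f : ℕ → α} {a : α} (h : HasSum (fun n => f (n + 1)) a) :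
    Tendsto (fun N => ∑ m ∈ Icc 1 N, f m) atTop (nhds a) := by
  refine h.tendsto_sum_nat.congr fun N => ?_
  rw [← Ico_add_one_right_eq_Icc, sum_Ico_eq_sum_range]
  simp only [add_comm 1, add_tsub_cancel_right]

theorem partial_sums_tendsto_arctan (x : ℝ) (hx : x ≠ 0) :
    Tendsto (fun M : ℕ =>
        I * ∑ m ∈ Finset.Icc 1 (M / 2 + 1),
          (1 / (2 * (m : ℂ) - 1)) *
            (1 / (1 + 2 * I / (x : ℂ)) ^ (2 * m - 1)
              - 1 / (1 - 2 * I / (x : ℂ)) ^ (2 * m - 1)))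
      atTop (nhds ((Real.arctan x : ℝ) : ℂ)) := by
  set a := 1 + 2 * I / (x : ℂ)
  set b := 1 - 2 * I / (x : ℂ)
  have ha : 1 < ‖a‖ := by
    convert one_lt_norm_one_add_ofReal_mul_I (div_ne_zero two_ne_zero hx) using 2
    push_cast; ring
  have hb : 1 < ‖b‖ := by
    convert one_lt_norm_one_add_ofReal_mul_I (div_ne_zero (neg_ne_zero.mpr two_ne_zero) hx) using 2
    push_cast; ring
  have hx' : (x : ℂ) ≠ 0 := ofReal_ne_zero.mpr hx
  have hqa : (a + 1) / (a - 1) = 1 - x * I := by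
    simp only [a]; field_simp; linear_combination 2 * (x : ℂ) * I_sq
  have hqb : (b + 1) / (b - 1) = 1 + x * I := by
    simp only [b]; field_simp; linear_combination 2 * (x : ℂ) * I_sq
  have hsum := (hasSum_half_log_add_one_div_sub_one ha).sub (hasSum_half_log_add_one_div_sub_one hb)
  rw [hqa, hqb, ← sub_div, ← neg_sub, log_one_add_ofReal_mul_I_sub_log_one_sub] at hsum
  have hlim : Tendsto (fun N : ℕ => ∑ m ∈ Icc 1 N,
      1 / (2 * (m : ℂ) - 1) * (1 / a ^ (2 * m - 1) - 1 / b ^ (2 * m - 1)))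
      atTop (nhds (-(2 * Real.arctan x * I) / 2)) :=
    tendsto_sum_Icc_one_of_hasSum <| hsum.congr_fun fun n => by
      rw [show 2 * (n + 1) - 1 = 2 * n + 1 by omega]; push_cast; ring
  have hvalue : I * (-(2 * Real.arctan x * I) / 2) = Real.arctan x := by
    linear_combination (-(Real.arctan x : ℂ)) * I_sq
  rw [← hvalue]
  exact (hlim.const_mul I).comp
    ((tendsto_add_atTop_nat 1).comp (Nat.tendsto_div_const_atTop two_ne_zero))
end
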